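/- Let X be a median graph whose set of hyperplanes is partitioned as ⨆_{i ∈ I} ℋᵢ, and for each i let πᵢ : X → X\\ℋᵢᶜ denote the projection to the collapse of all hyperplanes not in ℋᵢ. Then d(x, y) = Σ_{i ∈ I} d(πᵢ(x), πᵢ(y)) for all vertices x, y of X. -/

import Mathlib

/-! In a median graph, Djoković's lemma identifies the hyperplane of an edge `xy` with the set
of edges joining the halfspaces `W(x,y) = {v | d(v,x) < d(v,y)}` and `W(y,x)`. Hence each step of
a geodesic from `x` to `y` crosses a new hyperplane, and the hyperplanes it crosses are exactly
those separating `x` from `y`: `d(x,y)` is their number. Projecting the geodesic to the collapse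
of `𝒥` kills precisely the steps across hyperplanes of `𝒥`, and no walk in the collapse can do
better, so distances there count the separating hyperplanes outside `𝒥`. Summing this over the
partition gives the theorem. -/

open SimpleGraph

variable {V : Type*}

/-- Triangle condition of weak modularity. -/
def TriangleCond (X : SimpleGraph V) : Prop :=
  ∀ o x y : V, X.Adj x y → X.dist o x = X.dist o y →
    ∃ w : V, X.Adj w x ∧ X.Adj w y ∧ X.dist o w + 1 = X.dist o x

/-- Quadrangle condition of weak modularity. -/
def QuadCond (X : SimpleGraph V) : Prop :=
  ∀ o x y z : V, X.Adj z x → X.Adj z y → X.dist x y = 2 →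
    X.dist o z = X.dist o x + 1 → X.dist o z = X.dist o y + 1 →
    ∃ w : V, X.Adj w x ∧ X.Adj w y ∧ X.dist o w + 2 = X.dist o z

/-- No induced copy of the complete bipartite graph `K_{2,3}`. -/
def NoInducedK23 (X : SimpleGraph V) : Prop :=
  ¬ ∃ a b x y z : V, a ≠ b ∧ x ≠ y ∧ y ≠ z ∧ x ≠ z ∧
    X.Adj a x ∧ X.Adj a y ∧ X.Adj a z ∧ X.Adj b x ∧ X.Adj b y ∧ X.Adj b z ∧
    ¬ X.Adj a b ∧ ¬ X.Adj x y ∧ ¬ X.Adj y z ∧ ¬ X.Adj x z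

/-- No induced copy of `K₄` minus an edge. -/
def NoInducedK4minus (X : SimpleGraph V) : Prop :=
  ¬ ∃ a b c d : V, X.Adj a b ∧ X.Adj a c ∧ X.Adj a d ∧ X.Adj b c ∧ X.Adj b d ∧
    c ≠ d ∧ ¬ X.Adj c d

/-- A quasi-median graph: a connected weakly modular graph with no induced
`K_{2,3}` and no induced `K₄⁻`. -/
def QuasiMedian (X : SimpleGraph V) : Prop :=
  X.Connected ∧ TriangleCond X ∧ QuadCond X ∧ NoInducedK23 X ∧ NoInducedK4minus X

/-- `m` lies on a geodesic from `a` to `b`. -/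
def InInterval (X : SimpleGraph V) (a m b : V) : Prop :=
  X.dist a m + X.dist m b = X.dist a b

/-- `m` is a median of the triple `a, b, c`. -/
def IsMedianOf (X : SimpleGraph V) (m a b c : V) : Prop :=
  InInterval X a m b ∧ InInterval X b m c ∧ InInterval X a m c

/-- A median graph: connected, and every triple of vertices has a unique median. -/
def MedianGraph (X : SimpleGraph V) : Prop :=
  X.Connected ∧ ∀ a b c : V, ∃! m : V, IsMedianOf X m a b c

/-- The elementary relation on edges generating hyperplanes: two edges of a common
triangle, or opposite edges of an induced 4-cycle. -/
def EdgeRel (X : SimpleGraph V) (e f : Sym2 V) : Prop :=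
  (∃ a b c : V, X.Adj a b ∧ X.Adj b c ∧ X.Adj a c ∧ e = s(a, b) ∧ f = s(b, c)) ∨
  (∃ a b c d : V, X.Adj a b ∧ X.Adj b c ∧ X.Adj c d ∧ X.Adj d a ∧
    a ≠ c ∧ ¬ X.Adj a c ∧ b ≠ d ∧ ¬ X.Adj b d ∧ e = s(a, b) ∧ f = s(c, d))

/-- A hyperplane: an equivalence class of edges under the reflexive-transitive
closure of `EdgeRel`. -/
def IsHyperplane (X : SimpleGraph V) (J : Set (Sym2 V)) : Prop :=
  ∃ e ∈ X.edgeSet, J = {f | Relation.ReflTransGen (EdgeRel X) e f}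

/-- The hyperplane `J` separates `x` and `y`. -/
def SeparatesPts (X : SimpleGraph V) (J : Set (Sym2 V)) (x y : V) : Prop :=
  ¬ (X.deleteEdges J).Reachable x y

/-- A sector delimited by `J`: a connected component of `X` minus the edges of `J`. -/
def IsSectorOf (X : SimpleGraph V) (J : Set (Sym2 V)) (S : Set V) : Prop :=
  ∃ v : V, S = {w | (X.deleteEdges J).Reachable v w}

/-- A gated subset of vertices. -/
def IsGated (X : SimpleGraph V) (Y : Set V) : Prop :=
  Y.Nonempty ∧ ∀ x : V, ∃ y ∈ Y, ∀ z ∈ Y, X.dist x z = X.dist x y + X.dist y z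

/-- The gated hull of a set of vertices. -/
def GatedHull (X : SimpleGraph V) (A : Set V) : Set V :=
  ⋂₀ {Y : Set V | IsGated X Y ∧ A ⊆ Y}

/-- A polytope: the gated hull of a non-empty finite set of vertices. -/
def IsPolytope (X : SimpleGraph V) (P : Set V) : Prop :=
  ∃ A : Finset V, A.Nonempty ∧ P = GatedHull X (A : Set V)

/-- `HypOf X Y`: the hyperplanes separating two vertices of `Y` (the hyperplanes
crossing `Y`). -/
def HypOf (X : SimpleGraph V) (Y : Set V) : Set (Set (Sym2 V)) :=
  {J | IsHyperplane X J ∧ ∃ a ∈ Y, ∃ b ∈ Y, SeparatesPts X J a b}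

/-- The hyperplanes separating `A` from `B` (placing them in two distinct sectors). -/
def SepHyp (X : SimpleGraph V) (A B : Set V) : Set (Set (Sym2 V)) :=
  {J | IsHyperplane X J ∧ ∃ S T : Set V, IsSectorOf X J S ∧ IsSectorOf X J T ∧
    S ≠ T ∧ A ⊆ S ∧ B ⊆ T}

/-- The covering relation for polytopes: `P ⊊ Q` with no polytope strictly between. -/
def PolyCover (X : SimpleGraph V) (P Q : Set V) : Prop :=
  IsPolytope X P ∧ IsPolytope X Q ∧ P ⊂ Q ∧
    ¬ ∃ R : Set V, IsPolytope X R ∧ P ⊂ R ∧ R ⊂ Q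

abbrev PolyVert (X : SimpleGraph V) := {P : Set V // IsPolytope X P}

/-- The graph of polytopes: the covering graph of the inclusion poset of polytopes. -/
def PolyGraph (X : SimpleGraph V) : SimpleGraph (PolyVert X) where
  Adj P Q := PolyCover X P.val Q.val ∨ PolyCover X Q.val P.val
  symm := ⟨by intro P Q h; exact h.symm⟩
  loopless := ⟨by intro P h; rcases h with h | h <;> exact (ssubset_irrefl P.val) h.2.2.1⟩

/-- Two hyperplanes are transverse: there is an induced 4-cycle whose two pairs of
opposite edges belong respectively to the two hyperplanes. -/
def Transverse (X : SimpleGraph V) (J₁ J₂ : Set (Sym2 V)) : Prop :=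
  ∃ a b c d : V, X.Adj a b ∧ X.Adj b c ∧ X.Adj c d ∧ X.Adj d a ∧
    a ≠ c ∧ ¬ X.Adj a c ∧ b ≠ d ∧ ¬ X.Adj b d ∧
    s(a, b) ∈ J₁ ∧ s(c, d) ∈ J₁ ∧ s(b, c) ∈ J₂ ∧ s(d, a) ∈ J₂

/-- A prism: a polytope whose crossing hyperplanes are pairwise transverse (this
characterises the gated subgraphs decomposing as finite products of cliques). -/
def IsPrism (X : SimpleGraph V) (P : Set V) : Prop :=
  IsPolytope X P ∧ ∀ J₁ ∈ HypOf X P, ∀ J₂ ∈ HypOf X P, J₁ ≠ J₂ → Transverse X J₁ J₂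

/-- The covering relation for prisms. -/
def PrismCover (X : SimpleGraph V) (P Q : Set V) : Prop :=
  IsPrism X P ∧ IsPrism X Q ∧ P ⊂ Q ∧
    ¬ ∃ R : Set V, IsPrism X R ∧ P ⊂ R ∧ R ⊂ Q

abbrev PrismVert (X : SimpleGraph V) := {P : Set V // IsPrism X P}

/-- The graph of prisms. -/
def PrismGraph (X : SimpleGraph V) : SimpleGraph (PrismVert X) where
  Adj P Q := PrismCover X P.val Q.val ∨ PrismCover X Q.val P.val
  symm := ⟨by intro P Q h; exact h.symm⟩
  loopless := ⟨by intro P h; rcases h with h | h <;> exact (ssubset_irrefl P.val) h.2.2.1⟩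

/-- A convex set of vertices: closed under taking points on geodesics. -/
def IsConvexSet (X : SimpleGraph V) (Y : Set V) : Prop :=
  ∀ a ∈ Y, ∀ b ∈ Y, ∀ m : V, InInterval X a m b → m ∈ Y

/-- The convex hull of a set of vertices. -/
def ConvHull (X : SimpleGraph V) (A : Set V) : Set V :=
  ⋂₀ {Y : Set V | IsConvexSet X Y ∧ A ⊆ Y}

/-- The subgraph of `X` induced on `Y` (kept on the same vertex set). -/
def RestrictTo (X : SimpleGraph V) (Y : Set V) : SimpleGraph V where
  Adj a b := X.Adj a b ∧ a ∈ Y ∧ b ∈ Y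
  symm := ⟨by intro a b h; exact ⟨h.1.symm, h.2.2, h.2.1⟩⟩
  loopless := ⟨by intro a h; exact X.irrefl h.1⟩

/-- The setoid identifying the endpoints of every edge whose hyperplane lies
in `𝒥` (edge contraction). -/
def collapseSetoid (X : SimpleGraph V) (𝒥 : Set (Set (Sym2 V))) : Setoid V :=
  Relation.EqvGen.setoid (fun x y => X.Adj x y ∧ ∃ J ∈ 𝒥, s(x, y) ∈ J)

/-- The hyperplane-collapse `X\\𝒥`, obtained by collapsing all edges belonging
to hyperplanes of `𝒥`. -/
def CollapseGraph (X : SimpleGraph V) (𝒥 : Set (Set (Sym2 V))) :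
    SimpleGraph (Quotient (collapseSetoid X 𝒥)) :=
  SimpleGraph.fromRel (fun u v => ∃ x y : V, X.Adj x y ∧
    Quotient.mk (collapseSetoid X 𝒥) x = u ∧ Quotient.mk (collapseSetoid X 𝒥) y = v)

open Relation

lemma SimpleGraph.Walk.dist_add_dist_le_length {X : SimpleGraph V} {u v w : V} (p : X.Walk u v)
    (hw : w ∈ p.support) :
    X.dist u w + X.dist w v ≤ p.length := by
  classical
  rw [← p.take_spec hw, Walk.length_append]
  exact add_le_add (dist_le _) (dist_le _)

lemma SimpleGraph.exists_adj_dist_eq_of_dist_eq_succ {X : SimpleGraph V} {a x : V} {n : ℕ}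
    (h : X.dist a x = n + 1) : ∃ a', X.Adj a a' ∧ X.dist a' x = n := by
  obtain ⟨p, hp⟩ := exists_walk_of_dist_ne_zero (G := X) (u := a) (v := x) (by omega)
  cases p with
  | nil => simp at h
  | cons hadj q =>
    refine ⟨_, hadj, le_antisymm ?_ ?_⟩
    · have := dist_le q
      simp only [Walk.length_cons] at hp
      omega
    · have := hadj.reachable.dist_triangle_left x
      rw [dist_eq_one_iff_adj.mpr hadj] at this
      omega

lemma Set.Finite.ncard_eq_tsum_ncard_inter {α ι : Type*} {S : Set α} (hS : S.Finite)
    {t : ι → Set α} (ht : ∀ a ∈ S, ∃! i, a ∈ t i) : S.ncard = ∑' i, (S ∩ t i).ncard := by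
  set T := Function.support fun i ↦ (S ∩ t i).ncard
  have hT : T.Finite := by
    refine (hS.biUnion fun a ha ↦ Set.Subsingleton.finite (s := {i | a ∈ t i})
      fun i hi j hj ↦ (ht a ha).unique hi hj).subset fun i hi ↦ ?_
    obtain ⟨a, ha, hai⟩ := Set.nonempty_of_ncard_ne_zero hi
    exact Set.mem_biUnion ha hai
  have hcover : S = ⋃ i ∈ T, S ∩ t i := by
    refine subset_antisymm (fun a ha ↦ ?_) (Set.iUnion₂_subset fun _ _ ↦ Set.inter_subset_left)
    obtain ⟨i, hi, -⟩ := ht a ha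
    refine Set.mem_biUnion (x := i) ?_ ⟨ha, hi⟩
    exact (Set.ncard_pos (hS.inter_of_left _)).mpr ⟨a, ha, hi⟩ |>.ne'
  have hdisj : T.PairwiseDisjoint fun i ↦ S ∩ t i := fun i _ j _ hij ↦
    Set.disjoint_left.mpr fun a hai haj ↦ hij ((ht a hai.1).unique hai.2 haj.2)
  rw [tsum_eq_finsum hT, ← finsum_mem_support, ← hT.ncard_biUnion
    (fun _ _ ↦ hS.inter_of_left _) hdisj, ← hcover]

def hyperplaneOf (X : SimpleGraph V) (e : Sym2 V) : Set (Sym2 V) :=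
  {f | ReflTransGen (EdgeRel X) e f}

def separatingHyperplanes (X : SimpleGraph V) (x y : V) : Set (Set (Sym2 V)) :=
  {J | IsHyperplane X J ∧ SeparatesPts X J x y}

section Hyperplanes

variable {X : SimpleGraph V}

instance : Std.Symm (EdgeRel X) where
  symm := by
    rintro e f (⟨a, b, c, hab, hbc, hac, rfl, rfl⟩ |
      ⟨a, b, c, d, hab, hbc, hcd, hda, hac, hnac, hbd, hnbd, rfl, rfl⟩)
    · exact Or.inl ⟨c, b, a, hbc.symm, hab.symm, hac.symm, Sym2.eq_swap, Sym2.eq_swap⟩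
    · exact Or.inr ⟨c, d, a, b, hcd, hda, hab, hbc, hac.symm, fun h ↦ hnac h.symm, hbd.symm,
        fun h ↦ hnbd h.symm, rfl, rfl⟩

lemma hyperplaneOf_eq_of_mem {e f : Sym2 V} (h : f ∈ hyperplaneOf X e) :
    hyperplaneOf X e = hyperplaneOf X f := by
  have hsymm : ReflTransGen (EdgeRel X) f e := Std.Symm.symm _ _ h
  ext g
  exact ⟨hsymm.trans, h.trans⟩

lemma IsHyperplane.eq_hyperplaneOf {J : Set (Sym2 V)} {f : Sym2 V} (hJ : IsHyperplane X J)
    (hf : f ∈ J) : J = hyperplaneOf X f := by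
  obtain ⟨e, -, rfl⟩ := hJ
  exact hyperplaneOf_eq_of_mem hf

lemma isHyperplane_hyperplaneOf {a b : V} (hab : X.Adj a b) :
    IsHyperplane X (hyperplaneOf X s(a, b)) :=
  ⟨s(a, b), hab, rfl⟩

lemma reachable_deleteEdges_of_adj {J : Set (Sym2 V)} {a b : V} (hab : X.Adj a b)
    (h : s(a, b) ∉ J) : (X.deleteEdges J).Reachable a b :=
  Adj.reachable ((deleteEdges_adj ..).mpr ⟨hab, h⟩)

lemma separatingHyperplanes_comm (x y : V) :
    separatingHyperplanes X x y = separatingHyperplanes X y x := by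
  ext J
  exact and_congr_right' (not_congr ⟨Reachable.symm, Reachable.symm⟩)

lemma separatingHyperplanes_self (x : V) : separatingHyperplanes X x x = ∅ :=
  Set.eq_empty_of_forall_notMem fun _ hJ ↦ hJ.2 (Reachable.refl x)

lemma separatingHyperplanes_subset_union (x y z : V) :
    separatingHyperplanes X x z ⊆
      separatingHyperplanes X x y ∪ separatingHyperplanes X y z := by
  rintro J ⟨hJ, hxz⟩
  by_contra! h
  rw [Set.mem_union, not_or] at h
  have hxy : (X.deleteEdges J).Reachable x y := not_not.mp fun hxy ↦ h.1 ⟨hJ, hxy⟩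
  have hyz : (X.deleteEdges J).Reachable y z := not_not.mp fun hyz ↦ h.2 ⟨hJ, hyz⟩
  exact hxz (hxy.trans hyz)

lemma separatingHyperplanes_subset_of_adj {a b : V} (hab : X.Adj a b) :
    separatingHyperplanes X a b ⊆ {hyperplaneOf X s(a, b)} := by
  rintro J ⟨hJ, hsep⟩
  by_contra hne
  exact hsep (reachable_deleteEdges_of_adj hab fun hmem ↦ hne (hJ.eq_hyperplaneOf hmem))

end Hyperplanes

section Collapse

variable {X : SimpleGraph V} {𝒥 : Set (Set (Sym2 V))}

lemma collapse_mk_eq_of_mem {a b : V} {J : Set (Sym2 V)} (hab : X.Adj a b) (hJ : J ∈ 𝒥)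
    (hmem : s(a, b) ∈ J) :
    Quotient.mk (collapseSetoid X 𝒥) a = Quotient.mk (collapseSetoid X 𝒥) b :=
  Quotient.sound (EqvGen.rel a b ⟨hab, J, hJ, hmem⟩)

lemma collapseGraph_adj_of_adj {a b : V} (hab : X.Adj a b)
    (hne : Quotient.mk (collapseSetoid X 𝒥) a ≠ Quotient.mk _ b) :
    (CollapseGraph X 𝒥).Adj (Quotient.mk _ a) (Quotient.mk _ b) :=
  (fromRel_adj ..).mpr ⟨hne, Or.inl ⟨a, b, hab, rfl, rfl⟩⟩

lemma exists_adj_of_collapseGraph_adj {P Q : Quotient (collapseSetoid X 𝒥)}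
    (h : (CollapseGraph X 𝒥).Adj P Q) :
    ∃ a b, X.Adj a b ∧ Quotient.mk _ a = P ∧ Quotient.mk _ b = Q := by
  obtain ⟨-, ⟨a, b, hab, rfl, rfl⟩ | ⟨a, b, hab, rfl, rfl⟩⟩ := (fromRel_adj ..).mp h
  · exact ⟨a, b, hab, rfl, rfl⟩
  · exact ⟨b, a, hab.symm, rfl, rfl⟩

lemma separatingHyperplanes_subset_of_collapse_mk_eq (h𝒥 : ∀ J ∈ 𝒥, IsHyperplane X J)
    {u v : V} (h : Quotient.mk (collapseSetoid X 𝒥) u = Quotient.mk _ v) :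
    separatingHyperplanes X u v ⊆ 𝒥 := by
  rintro J ⟨hJ, hsep⟩
  by_contra hJ𝒥
  refine hsep ?_
  have huv : EqvGen (fun x y ↦ X.Adj x y ∧ ∃ J ∈ 𝒥, s(x, y) ∈ J) u v :=
    Quotient.exact h
  clear hsep h
  induction huv with
  | rel a b hab =>
    obtain ⟨hadj, J', hJ', hmem⟩ := hab
    refine reachable_deleteEdges_of_adj hadj fun hmemJ ↦ hJ𝒥 ?_
    rwa [hJ.eq_hyperplaneOf hmemJ, ← (h𝒥 J' hJ').eq_hyperplaneOf hmem]
  | refl => rfl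
  | symm _ _ _ ih => exact ih.symm
  | trans _ _ _ _ _ ih₁ ih₂ => exact ih₁.trans ih₂

lemma ncard_separatingHyperplanes_sdiff_le_one (h𝒥 : ∀ J ∈ 𝒥, IsHyperplane X J) {u w : V}
    (h : (CollapseGraph X 𝒥).Adj (Quotient.mk _ u) (Quotient.mk _ w)) :
    (separatingHyperplanes X u w \ 𝒥).ncard ≤ 1 := by
  obtain ⟨a, b, hab, ha, hb⟩ := exists_adj_of_collapseGraph_adj h
  have hua := separatingHyperplanes_subset_of_collapse_mk_eq h𝒥 ha.symm
  have hbw := separatingHyperplanes_subset_of_collapse_mk_eq h𝒥 hb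
  have hsub : separatingHyperplanes X u w \ 𝒥 ⊆ {hyperplaneOf X s(a, b)} := by
    rintro J ⟨hJ, hJ𝒥⟩
    rcases separatingHyperplanes_subset_union u a w hJ with hJ | hJ
    · exact absurd (hua hJ) hJ𝒥
    rcases separatingHyperplanes_subset_union a b w hJ with hJ | hJ
    · exact separatingHyperplanes_subset_of_adj hab hJ
    · exact absurd (hbw hJ) hJ𝒥
  simpa using Set.ncard_le_ncard hsub

end Collapse

def halfspace (X : SimpleGraph V) (x y : V) : Set V :=
  {v | X.dist v x < X.dist v y}

lemma notMem_halfspace_of_mem {X : SimpleGraph V} {x y v : V} (h : v ∈ halfspace X x y) :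
    v ∉ halfspace X y x :=
  fun h' ↦ lt_asymm (α := ℕ) h h'

lemma left_mem_halfspace {X : SimpleGraph V} {x y : V} (hxy : X.Adj x y) :
    x ∈ halfspace X x y := by
  simp [halfspace, dist_eq_one_iff_adj.mpr hxy]

def Crosses (X : SimpleGraph V) (x y : V) (e : Sym2 V) : Prop :=
  ∃ a ∈ halfspace X x y, ∃ b ∈ halfspace X y x, e = s(a, b)

namespace MedianGraph

variable {X : SimpleGraph V} {𝒥 : Set (Set (Sym2 V))}

lemma dist_ne_of_adj (hX : MedianGraph X) {u v : V} (h : X.Adj u v) (w : V) :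
    X.dist u w ≠ X.dist v w := by
  intro hEq
  obtain ⟨m, ⟨h1, h2, h3⟩, -⟩ := hX.2 w u v
  unfold InInterval at h1 h2 h3
  rw [dist_comm (u := u) (v := m), dist_eq_one_iff_adj.mpr h] at h2
  rw [dist_comm (u := u), dist_comm (u := v)] at hEq
  omega

lemma dist_eq_add_one_or (hX : MedianGraph X) {u v : V} (h : X.Adj u v) (w : V) :
    X.dist v w = X.dist u w + 1 ∨ X.dist u w = X.dist v w + 1 := by
  have hne := hX.dist_ne_of_adj h w
  rw [dist_comm (u := u), dist_comm (u := v)] at hne ⊢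
  rcases h.diff_dist_adj (u := w) with h' | h' | h' <;> omega

lemma not_adj_of_adj_of_adj (hX : MedianGraph X) {a b c : V} (hab : X.Adj a b)
    (hbc : X.Adj b c) : ¬ X.Adj a c := fun hac ↦
  hX.dist_ne_of_adj hbc a (by
    rw [dist_comm, dist_eq_one_iff_adj.mpr hab, dist_comm, dist_eq_one_iff_adj.mpr hac])

lemma dist_eq_two (hX : MedianGraph X) {a b c : V} (hab : X.Adj a b) (hbc : X.Adj b c)
    (hac : a ≠ c) : X.dist a c = 2 := by
  have hle : X.dist a c ≤ X.dist a b + X.dist b c := hX.1.dist_triangle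
  have hlt := hX.1.one_lt_dist_of_ne_of_not_adj hac (hX.not_adj_of_adj_of_adj hab hbc)
  rw [dist_eq_one_iff_adj.mpr hab, dist_eq_one_iff_adj.mpr hbc] at hle
  omega

/-- The quadrangle condition. -/
lemma exists_adj_adj_dist_add_one (hX : MedianGraph X) {o z p q : V} (hzp : X.Adj z p)
    (hzq : X.Adj z q) (hpq : p ≠ q) (hp : X.dist z o = X.dist p o + 1)
    (hq : X.dist z o = X.dist q o + 1) :
    ∃ w, X.Adj p w ∧ X.Adj w q ∧ X.dist w o + 1 = X.dist p o := by
  obtain ⟨m, ⟨h1, h2, h3⟩, -⟩ := hX.2 o p q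
  unfold InInterval at h1 h2 h3
  rw [hX.dist_eq_two hzp.symm hzq hpq] at h2
  have c1 : X.dist p o = X.dist o p := dist_comm
  have c2 : X.dist q o = X.dist o q := dist_comm
  have c3 : X.dist m o = X.dist o m := dist_comm
  have c4 : X.dist p m = X.dist m p := dist_comm
  exact ⟨m, dist_eq_one_iff_adj.mp (by omega), dist_eq_one_iff_adj.mp (by omega), by omega⟩

lemma mem_halfspace_or_mem_halfspace (hX : MedianGraph X) {x y : V} (hxy : X.Adj x y) (v : V) :
    v ∈ halfspace X x y ∨ v ∈ halfspace X y x := by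
  have := hX.dist_ne_of_adj hxy v
  rw [dist_comm (u := x), dist_comm (u := y)] at this
  exact this.lt_or_gt

lemma dist_eq_add_one_of_mem_halfspace (hX : MedianGraph X) {x y v : V} (hxy : X.Adj x y)
    (hv : v ∈ halfspace X x y) : X.dist v y = X.dist v x + 1 := by
  have := hX.dist_eq_add_one_or hxy v
  rw [dist_comm (u := x), dist_comm (u := y)] at this
  have : X.dist v x < X.dist v y := hv
  omega

lemma dist_of_crossing_edge (hX : MedianGraph X) {x y a b : V} (hxy : X.Adj x y)
    (hab : X.Adj a b) (ha : a ∈ halfspace X x y) (hb : b ∈ halfspace X y x) :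
    X.dist a y = X.dist a x + 1 ∧ X.dist b x = X.dist a x + 1 ∧ X.dist b y = X.dist a x := by
  have hay := hX.dist_eq_add_one_of_mem_halfspace hxy ha
  have hbx := hX.dist_eq_add_one_of_mem_halfspace hxy.symm hb
  have := hX.dist_eq_add_one_or hab x
  have := hX.dist_eq_add_one_or hab y
  omega

/-- Djoković's lemma. Induct on `d(a, x)`: the quadrangle condition at `y` closes a square
`a a' w b` whose edge `a'w` is again crossing, one step closer to `x`. -/
lemma mem_hyperplaneOf_of_mem_halfspace (hX : MedianGraph X) {x y : V} (hxy : X.Adj x y)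
    {a b : V} (hab : X.Adj a b) (ha : a ∈ halfspace X x y) (hb : b ∈ halfspace X y x) :
    s(a, b) ∈ hyperplaneOf X s(x, y) := by
  induction hn : X.dist a x using Nat.strong_induction_on generalizing a b with
  | _ n ih =>
    obtain ⟨hay, hbx, hby⟩ := hX.dist_of_crossing_edge hxy hab ha hb
    rcases n with _ | m
    · obtain rfl := hX.1.dist_eq_zero_iff.mp hn
      obtain rfl := hX.1.dist_eq_zero_iff.mp (hby.trans hn)
      exact ReflTransGen.refl
    obtain ⟨a', haa', ha'x⟩ := exists_adj_dist_eq_of_dist_eq_succ hn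
    have ha'y : X.dist a' y = m + 1 := by
      have := hX.dist_eq_add_one_or haa' y
      have := hX.dist_eq_add_one_or hxy a'
      rw [dist_comm (u := x), dist_comm (u := y)] at this
      omega
    have ha'b : a' ≠ b := by rintro rfl; omega
    obtain ⟨w, ha'w, hwb, hwy⟩ :=
      hX.exists_adj_adj_dist_add_one (o := y) haa' hab ha'b (by omega) (by omega)
    have hwx : X.dist w x = m + 1 := by
      have := hX.dist_eq_add_one_or ha'w x
      have := hX.dist_eq_add_one_or hwb x
      omega
    have ha' : a' ∈ halfspace X x y := show X.dist a' x < X.dist a' y by omega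
    have hw : w ∈ halfspace X y x := show X.dist w y < X.dist w x by omega
    have hwa : w ≠ a := by rintro rfl; omega
    exact (ih m (by omega) ha'w ha' hw ha'x).tail (Or.inr ⟨a', w, b, a, ha'w, hwb, hab.symm,
      haa', ha'b, hX.not_adj_of_adj_of_adj haa'.symm hab, hwa,
      hX.not_adj_of_adj_of_adj hwb hab.symm, rfl, Sym2.eq_swap⟩)

/-- Local convexity of halfspaces: otherwise `b` and the vertex given by the quadrangle condition
at `x` would be two distinct medians of `a, c, y`. -/
lemma mem_halfspace_of_adj_of_adj (hX : MedianGraph X) {x y a b c : V} (hxy : X.Adj x y)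
    (hab : X.Adj a b) (hbc : X.Adj b c) (hac : a ≠ c) (ha : a ∈ halfspace X x y)
    (hc : c ∈ halfspace X x y) : b ∈ halfspace X x y := by
  refine (hX.mem_halfspace_or_mem_halfspace hxy b).resolve_right fun hb ↦ ?_
  obtain ⟨hay, hbx, hby⟩ := hX.dist_of_crossing_edge hxy hab ha hb
  have hcy := hX.dist_eq_add_one_of_mem_halfspace hxy hc
  have hcx : X.dist c x = X.dist a x := by
    have := hX.dist_eq_add_one_or hbc x
    have := hX.dist_eq_add_one_or hbc y
    omega
  obtain ⟨w, haw, hwc, hwx⟩ :=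
    hX.exists_adj_adj_dist_add_one (o := x) hab.symm hbc hac (by omega) (by omega)
  have hwy : X.dist w y = X.dist a x := by
    have := hX.dist_eq_add_one_or haw y
    have := hX.dist_eq_add_one_or hxy w
    rw [dist_comm (u := x), dist_comm (u := y)] at this
    omega
  have hmedian : ∀ m, X.Adj a m → X.Adj m c → X.dist m y = X.dist a x →
      IsMedianOf X m a c y := fun m ham hmc hmy ↦ by
    have h1 := dist_eq_one_iff_adj.mpr ham
    have h2 := dist_eq_one_iff_adj.mpr hmc
    have h3 := dist_eq_one_iff_adj.mpr hmc.symm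
    have h4 := hX.dist_eq_two hab hbc hac
    refine ⟨?_, ?_, ?_⟩ <;> unfold InInterval <;> omega
  have hbw := (hX.2 a c y).unique (hmedian b hab hbc hby) (hmedian w haw hwc hwy)
  rw [hbw] at hbx
  omega

lemma crosses_of_square (hX : MedianGraph X) {x y p q r t : V} (hxy : X.Adj x y)
    (hpq : X.Adj p q) (hqr : X.Adj q r) (htp : X.Adj t p) (hpr : p ≠ r)
    (hqt : q ≠ t) (hp : p ∈ halfspace X x y) (hq : q ∈ halfspace X y x) :
    Crosses X x y s(r, t) := by
  rcases hX.mem_halfspace_or_mem_halfspace hxy r with hr | hr <;>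
    rcases hX.mem_halfspace_or_mem_halfspace hxy t with ht | ht
  · exact absurd (hX.mem_halfspace_of_adj_of_adj hxy hpq hqr hpr hp hr)
      (notMem_halfspace_of_mem hq)
  · exact ⟨r, hr, t, ht, rfl⟩
  · exact ⟨t, ht, r, hr, Sym2.eq_swap⟩
  · exact absurd (hX.mem_halfspace_of_adj_of_adj hxy.symm hpq.symm htp.symm hqt hq ht)
      (notMem_halfspace_of_mem hp)

lemma crosses_of_edgeRel (hX : MedianGraph X) {x y : V} (hxy : X.Adj x y) {e f : Sym2 V}
    (he : Crosses X x y e) (hef : EdgeRel X e f) : Crosses X x y f := by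
  obtain ⟨a, ha, b, hb, rfl⟩ := he
  rcases hef with ⟨p, q, r, hpq, hqr, hpr, -, -⟩ |
    ⟨p, q, r, t, hpq, hqr, -, htp, hpr, -, hqt, -, he, rfl⟩
  · exact absurd hpr (hX.not_adj_of_adj_of_adj hpq hqr)
  rcases Sym2.eq_iff.mp he with ⟨rfl, rfl⟩ | ⟨rfl, rfl⟩
  · exact hX.crosses_of_square hxy hpq hqr htp hpr hqt ha hb
  · rw [Sym2.eq_swap]
    exact hX.crosses_of_square hxy hpq.symm htp.symm hqr.symm hqt hpr ha hb

lemma crosses_of_mem_hyperplaneOf (hX : MedianGraph X) {x y : V} (hxy : X.Adj x y)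
    {f : Sym2 V} (hf : f ∈ hyperplaneOf X s(x, y)) : Crosses X x y f := by
  induction hf with
  | refl => exact ⟨x, left_mem_halfspace hxy, y, left_mem_halfspace hxy.symm, rfl⟩
  | tail _ hef ih => exact hX.crosses_of_edgeRel hxy ih hef

lemma separatesPts_hyperplaneOf (hX : MedianGraph X) {x y u v : V} (hxy : X.Adj x y)
    (hu : u ∈ halfspace X x y) (hv : v ∈ halfspace X y x) :
    SeparatesPts X (hyperplaneOf X s(x, y)) u v := by
  rintro ⟨p⟩
  obtain ⟨d, -, hd₁, hd₂⟩ :=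
    p.exists_boundary_dart (halfspace X x y) hu (notMem_halfspace_of_mem hv)
  obtain ⟨hadj, hnotMem⟩ := (deleteEdges_adj ..).mp d.adj
  exact hnotMem (hX.mem_hyperplaneOf_of_mem_halfspace hxy hadj hd₁
    ((hX.mem_halfspace_or_mem_halfspace hxy d.snd).resolve_left hd₂))

/-- A geodesic from `v` to `y` stays in the halfspace of `v`, so avoids the hyperplane of `xv`. -/
lemma hyperplaneOf_notMem_separatingHyperplanes (hX : MedianGraph X) {x v y : V}
    (hxv : X.Adj x v) (hd : X.dist x y = X.dist v y + 1) :
    hyperplaneOf X s(x, v) ∉ separatingHyperplanes X v y := by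
  rintro ⟨-, hsep⟩
  obtain ⟨p, hp⟩ := hX.1.exists_walk_length_eq_dist v y
  have hside : ∀ w ∈ p.support, w ∈ halfspace X v x := fun w hw ↦ by
    have h₁ := p.dist_add_dist_le_length hw
    have h₂ : X.dist x y ≤ X.dist x w + X.dist w y := hX.1.dist_triangle
    have c₁ : X.dist w v = X.dist v w := dist_comm
    have c₂ : X.dist w x = X.dist x w := dist_comm
    simp only [halfspace, Set.mem_ofPred_eq]
    omega
  refine hsep ⟨p.toDeleteEdges _ fun e he hmem ↦ ?_⟩
  obtain ⟨a, ha, b, -, rfl⟩ := hX.crosses_of_mem_hyperplaneOf hxv hmem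
  exact notMem_halfspace_of_mem (hside a (p.fst_mem_support_of_mem_edges he)) ha

lemma separatingHyperplanes_eq_insert (hX : MedianGraph X) {x v y : V} (hxv : X.Adj x v)
    (hd : X.dist x y = X.dist v y + 1) :
    separatingHyperplanes X x y =
      insert (hyperplaneOf X s(x, v)) (separatingHyperplanes X v y) := by
  have hnotMem := hX.hyperplaneOf_notMem_separatingHyperplanes hxv hd
  refine subset_antisymm (fun J hJ ↦ ?_) (Set.insert_subset ?_ fun J hJ ↦ ?_)
  · exact (separatingHyperplanes_subset_union x v y hJ).imp_left
      (separatingHyperplanes_subset_of_adj hxv ·)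
  · have hy : y ∈ halfspace X v x := by
      have c₁ : X.dist y v = X.dist v y := dist_comm
      have c₂ : X.dist y x = X.dist x y := dist_comm
      simp only [halfspace, Set.mem_ofPred_eq]
      omega
    exact ⟨isHyperplane_hyperplaneOf hxv,
      hX.separatesPts_hyperplaneOf hxv (left_mem_halfspace hxv) hy⟩
  · refine (separatingHyperplanes_subset_union v x y hJ).resolve_left fun hvx ↦ hnotMem ?_
    rw [separatingHyperplanes_comm] at hvx
    rwa [← separatingHyperplanes_subset_of_adj hxv hvx]

lemma encard_separatingHyperplanes (hX : MedianGraph X) (x y : V) :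
    (separatingHyperplanes X x y).encard = X.dist x y := by
  induction hn : X.dist x y generalizing x with
  | zero => simp [hX.1.dist_eq_zero_iff.mp hn, separatingHyperplanes_self]
  | succ n ih =>
    obtain ⟨v, hxv, hv⟩ := exists_adj_dist_eq_of_dist_eq_succ hn
    rw [hX.separatingHyperplanes_eq_insert hxv (by omega),
      Set.encard_insert_of_notMem (hX.hyperplaneOf_notMem_separatingHyperplanes hxv (by omega)),
      ih v hv, Nat.cast_succ]

lemma separatingHyperplanes_finite (hX : MedianGraph X) (x y : V) :
    (separatingHyperplanes X x y).Finite :=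
  Set.finite_of_encard_eq_coe (hX.encard_separatingHyperplanes x y)

lemma dist_eq_ncard_separatingHyperplanes (hX : MedianGraph X) (x y : V) :
    X.dist x y = (separatingHyperplanes X x y).ncard := by
  rw [Set.ncard_def, hX.encard_separatingHyperplanes, ENat.toNat_natCast]

lemma ncard_separatingHyperplanes_sdiff_le_length (hX : MedianGraph X)
    (h𝒥 : ∀ J ∈ 𝒥, IsHyperplane X J) {P Q : Quotient (collapseSetoid X 𝒥)}
    (p : (CollapseGraph X 𝒥).Walk P Q) {u w : V} (hu : Quotient.mk _ u = P)
    (hw : Quotient.mk _ w = Q) : (separatingHyperplanes X u w \ 𝒥).ncard ≤ p.length := by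
  induction p generalizing u with
  | nil =>
    have := separatingHyperplanes_subset_of_collapse_mk_eq h𝒥 (hu.trans hw.symm)
    simp [Set.sdiff_eq_empty.mpr this]
  | @cons _ R _ hadj q ih =>
    obtain ⟨b, rfl⟩ := Quotient.exists_rep R
    subst hu
    have hsub : separatingHyperplanes X u w \ 𝒥 ⊆
        separatingHyperplanes X u b \ 𝒥 ∪ separatingHyperplanes X b w \ 𝒥 :=
      (Set.sdiff_subset_sdiff_left (separatingHyperplanes_subset_union u b w)).trans
        Set.union_sdiff_distrib.subset
    have hfin := ((hX.separatingHyperplanes_finite u b).sdiff (t := 𝒥)).union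
      ((hX.separatingHyperplanes_finite b w).sdiff (t := 𝒥))
    calc (separatingHyperplanes X u w \ 𝒥).ncard
        ≤ (separatingHyperplanes X u b \ 𝒥).ncard +
            (separatingHyperplanes X b w \ 𝒥).ncard :=
          (Set.ncard_le_ncard hsub hfin).trans (Set.ncard_union_le _ _)
      _ ≤ 1 + q.length :=
          add_le_add (ncard_separatingHyperplanes_sdiff_le_one h𝒥 hadj) (ih rfl hw)
      _ = (Walk.cons hadj q).length := by rw [Walk.length_cons, add_comm]

lemma exists_walk_length_le_ncard_separatingHyperplanes_sdiff (hX : MedianGraph X) (x y : V) :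
    ∃ p : (CollapseGraph X 𝒥).Walk (Quotient.mk _ x) (Quotient.mk _ y),
      p.length ≤ (separatingHyperplanes X x y \ 𝒥).ncard := by
  induction hn : X.dist x y generalizing x with
  | zero =>
    obtain rfl := hX.1.dist_eq_zero_iff.mp hn
    exact ⟨Walk.nil, by simp⟩
  | succ n ih =>
    obtain ⟨v, hxv, hv⟩ := exists_adj_dist_eq_of_dist_eq_succ hn
    obtain ⟨p, hp⟩ := ih v hv
    have hd : X.dist x y = X.dist v y + 1 := by omega
    rw [hX.separatingHyperplanes_eq_insert hxv hd]
    by_cases hJ : hyperplaneOf X s(x, v) ∈ 𝒥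
    · rw [Set.insert_sdiff_of_mem _ hJ]
      exact ⟨p.copy (collapse_mk_eq_of_mem hxv hJ ReflTransGen.refl).symm rfl,
        by rwa [Walk.length_copy]⟩
    rw [Set.insert_sdiff_of_notMem _ hJ, Set.ncard_insert_of_notMem
      (fun h ↦ hX.hyperplaneOf_notMem_separatingHyperplanes hxv hd h.1)
      ((hX.separatingHyperplanes_finite v y).sdiff)]
    by_cases hxv' : Quotient.mk (collapseSetoid X 𝒥) x = Quotient.mk _ v
    · exact ⟨p.copy hxv'.symm rfl, by rw [Walk.length_copy]; omega⟩
    · exact ⟨Walk.cons (collapseGraph_adj_of_adj hxv hxv') p, by rw [Walk.length_cons]; omega⟩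

lemma dist_collapseGraph (hX : MedianGraph X) (h𝒥 : ∀ J ∈ 𝒥, IsHyperplane X J) (x y : V) :
    (CollapseGraph X 𝒥).dist (Quotient.mk _ x) (Quotient.mk _ y) =
      (separatingHyperplanes X x y \ 𝒥).ncard := by
  obtain ⟨p, hp⟩ :=
    hX.exists_walk_length_le_ncard_separatingHyperplanes_sdiff (𝒥 := 𝒥) x y
  obtain ⟨q, hq⟩ := Reachable.exists_walk_length_eq_dist ⟨p⟩
  exact le_antisymm ((dist_le p).trans hp)
    (hq ▸ hX.ncard_separatingHyperplanes_sdiff_le_length h𝒥 q rfl rfl)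

end MedianGraph

theorem stmt7_general (X : SimpleGraph V) (hX : MedianGraph X) {I : Type*}
    (ℋ : I → Set (Set (Sym2 V)))
    (hpart : ∀ J : Set (Sym2 V), IsHyperplane X J → ∃! i : I, J ∈ ℋ i)
    (x y : V) :
    X.dist x y =
      ∑' i : I, (CollapseGraph X {J | IsHyperplane X J ∧ J ∉ ℋ i}).dist
        (Quotient.mk _ x) (Quotient.mk _ y) := by
  rw [hX.dist_eq_ncard_separatingHyperplanes, (hX.separatingHyperplanes_finite x y)
    |>.ncard_eq_tsum_ncard_inter fun J hJ ↦ hpart J hJ.1]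
  refine tsum_congr fun i ↦ ?_
  rw [hX.dist_collapseGraph fun J hJ ↦ hJ.1]
  congr 1
  ext J
  exact ⟨fun ⟨hJ, hJi⟩ ↦ ⟨hJ, fun h ↦ h.2 hJi⟩,
    fun ⟨hJ, hJi⟩ ↦ ⟨hJ, by_contra fun h ↦ hJi ⟨hJ.1, h⟩⟩⟩

/-- If the hyperplanes of a median graph are partitioned as `⨆ i, ℋ i`, and `πᵢ`
is the projection to the collapse of all hyperplanes *not* in `ℋ i`, then
`d(x,y) = Σᵢ d(πᵢ x, πᵢ y)`. -/
theorem stmt7 (X : SimpleGraph V) (hX : MedianGraph X) {I : Type*}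
    (ℋ : I → Set (Set (Sym2 V)))
    (hhyp : ∀ i, ∀ J ∈ ℋ i, IsHyperplane X J)
    (hpart : ∀ J : Set (Sym2 V), IsHyperplane X J → ∃! i : I, J ∈ ℋ i)
    (x y : V) :
    X.dist x y =
      ∑' i : I, (CollapseGraph X {J | IsHyperplane X J ∧ J ∉ ℋ i}).dist
        (Quotient.mk _ x) (Quotient.mk _ y) :=
  stmt7_general X hX ℋ hpart x y
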